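/- arXiv:2208.08718 — 3 statements merged into one kernel-verified Lean document; each statement's English description precedes it below -/
import Mathlib

section
/- Let G = (V,E) be a finite graph, w : V → ℕ node weights, k ∈ ℕ, and for each node v an antitone predicate P_v over assignments x : closed-neighborhood(v) → {0,…,k}, meaning: if P_v holds for x and x' is pointwise at most x, then P_v holds for x'. Suppose o : V → {0,…,k} is feasible (P_v holds at every v) and maximizes ∑_v w(v)·o(v). Then for every U ⊆ V and every g : U ∪ N²(U) → {0,…,k} with g ≡ 0 on N²(U), g ≡ 0 on rim(U), and P_v(g) holding for all v ∈ inner(U ∪ N²(U)) — in particular g respects feasibility at all nodes of U — we have ∑_{v ∈ U} w(v)·o(v) ≥ ∑_{v ∈ inner²(U)} w(v)·g(v). -/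
/-!
Patch the optimum `o`: keep it outside `U`, use `g` on `inner²(U)` and `0` on `rim(U)`. Every node
of `inner(U)` sees only nodes of `U`, where the patch is at most `g`; every other node sees no
node of `inner²(U)`, so there the patch is at most `o`. By antitonicity the patch is feasible, and
comparing its weight with that of `o` leaves `∑_{inner²(U)} w g ≤ ∑_U w o`.
-/

/-- `inner(U) = {u ∈ U | N(u) ⊆ U}` as a Finset. -/
def innF {V : Type*} [Fintype V] [DecidableEq V] (G : SimpleGraph V) [DecidableRel G.Adj]
    (U : Finset V) : Finset V :=
  U.filter fun u => ∀ x, G.Adj u x → x ∈ U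

/-- `N²(U)`: the nodes outside `U` at distance at most 2 from a node of `U`. -/
def n2F {V : Type*} [Fintype V] [DecidableEq V] (G : SimpleGraph V) [DecidableRel G.Adj]
    (U : Finset V) : Finset V :=
  Finset.univ.filter fun v =>
    v ∉ U ∧ ∃ u ∈ U, G.Adj v u ∨ ∃ x, G.Adj v x ∧ G.Adj x u

def IsLocallyAntitone {V : Type*} (G : SimpleGraph V) (P : V → (V → ℕ) → Prop) : Prop :=
  ∀ v (x x' : V → ℕ), (∀ u, (u = v ∨ G.Adj v u) → x' u ≤ x u) → P v x → P v x'

section Inner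

variable {V : Type*} [Fintype V] [DecidableEq V] {G : SimpleGraph V} [DecidableRel G.Adj]

theorem mem_innF {U : Finset V} {v : V} : v ∈ innF G U ↔ v ∈ U ∧ ∀ x, G.Adj v x → x ∈ U :=
  Finset.mem_filter

theorem innF_subset (U : Finset V) : innF G U ⊆ U :=
  Finset.filter_subset _ _

theorem innF_innF_subset (U : Finset V) : innF G (innF G U) ⊆ U :=
  (innF_subset _).trans (innF_subset U)

theorem innF_mono {U U' : Finset V} (h : U ⊆ U') : innF G U ⊆ innF G U' := fun _ hv =>
  mem_innF.2 ⟨h (mem_innF.1 hv).1, fun x hx => h ((mem_innF.1 hv).2 x hx)⟩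

theorem mem_of_mem_innF {U : Finset V} {u v : V} (hv : v ∈ innF G U)
    (hu : u = v ∨ G.Adj v u) : u ∈ U := by
  rcases hu with rfl | hadj
  exacts [(mem_innF.1 hv).1, (mem_innF.1 hv).2 u hadj]

end Inner

section Hybrid

variable {V : Type*} [Fintype V] [DecidableEq V] {G : SimpleGraph V} [DecidableRel G.Adj]
  {U : Finset V} {g o : V → ℕ}

variable (G U g o) in
def hybrid : V → ℕ :=
  (innF G (innF G U)).piecewise g (U.piecewise 0 o)

theorem hybrid_le_left {v : V} (hv : v ∈ U) : hybrid G U g o v ≤ g v := by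
  by_cases hS : v ∈ innF G (innF G U) <;> simp [hybrid, hS, hv]

theorem hybrid_le_right {v : V} (hv : v ∉ innF G (innF G U)) : hybrid G U g o v ≤ o v := by
  by_cases hU : v ∈ U <;> simp [hybrid, hv, hU]

theorem hybrid_le {k : ℕ} (hg : ∀ v, g v ≤ k) (ho : ∀ v, o v ≤ k) (v : V) :
    hybrid G U g o v ≤ k := by
  by_cases hS : v ∈ innF G (innF G U)
  · exact (hybrid_le_left (innF_innF_subset U hS)).trans (hg v)
  · exact (hybrid_le_right hS).trans (ho v)

theorem hybrid_of_not_mem {v : V} (hv : v ∉ U) : hybrid G U g o v = o v := by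
  have hS : v ∉ innF G (innF G U) := fun h => hv (innF_innF_subset U h)
  simp [hybrid, hS, hv]

theorem sum_mul_hybrid (w : V → ℕ) :
    ∑ v, w v * hybrid G U g o v =
      ∑ v ∈ innF G (innF G U), w v * g v + ∑ v ∈ Uᶜ, w v * o v := by
  rw [← Finset.sum_add_sum_compl U]
  congr 1
  · rw [← Finset.sum_subset (innF_innF_subset (G := G) U) fun v hvU hvS => by simp [hybrid, hvU, hvS]]
    exact Finset.sum_congr rfl fun v hv => by simp [hybrid, hv]
  · exact Finset.sum_congr rfl fun v hv => by rw [hybrid_of_not_mem (Finset.mem_compl.1 hv)]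

theorem hybrid_feasible {P : V → (V → ℕ) → Prop} (hanti : IsLocallyAntitone G P)
    (ho : ∀ v, P v o) (hg : ∀ v ∈ innF G U, P v g) (v : V) : P v (hybrid G U g o) := by
  by_cases hv : v ∈ innF G U
  · exact hanti v g _ (fun u hu => hybrid_le_left (mem_of_mem_innF hv hu)) (hg v hv)
  · exact hanti v o _ (fun u hu => hybrid_le_right fun huS =>
      hv (mem_of_mem_innF huS (hu.imp Eq.symm SimpleGraph.Adj.symm))) (ho v)

end Hybrid

theorem stmt4_general {V : Type*} [Fintype V] [DecidableEq V] (G : SimpleGraph V)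
    [DecidableRel G.Adj] (w : V → ℕ) (k : ℕ) (P : V → (V → ℕ) → Prop)
    (hanti : ∀ v (x x' : V → ℕ),
      (∀ u, (u = v ∨ G.Adj v u) → x' u ≤ x u) → P v x → P v x')
    (o : V → ℕ) (hok : ∀ v, o v ≤ k) (hfeas : ∀ v, P v o)
    (hopt : ∀ o' : V → ℕ, (∀ v, o' v ≤ k) → (∀ v, P v o') →
      ∑ v, w v * o' v ≤ ∑ v, w v * o v)
    (U : Finset V) (g : V → ℕ) (hgk : ∀ v, g v ≤ k)
    (hg : ∀ v ∈ innF G (U ∪ n2F G U), P v g) :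
    ∑ v ∈ innF G (innF G U), w v * g v ≤ ∑ v ∈ U, w v * o v := by
  have hgU : ∀ v ∈ innF G U, P v g := fun v hv => hg v (innF_mono Finset.subset_union_left hv)
  have hbound := hopt _ (hybrid_le hgk hok) (hybrid_feasible (G := G) hanti hfeas hgU)
  rw [sum_mul_hybrid, ← Finset.sum_add_sum_compl U] at hbound
  exact Nat.le_of_add_le_add_right hbound

/-- Lemma 4.2 (packing MaxDGPs): if `o` is a maximum-weight assignment feasible for the
antitone local predicates `P`, then for any `U` and any `g` vanishing on `N²(U)` and on
`rim(U)` and respecting the predicates at `inner(U ∪ N²(U))`, we have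
`∑_{v ∈ U} w(v)·o(v) ≥ ∑_{v ∈ inner²(U)} w(v)·g(v)`. -/
theorem stmt4 {V : Type*} [Fintype V] [DecidableEq V] (G : SimpleGraph V)
    [DecidableRel G.Adj] (w : V → ℕ) (k : ℕ) (P : V → (V → ℕ) → Prop)
    (hanti : ∀ v (x x' : V → ℕ),
      (∀ u, (u = v ∨ G.Adj v u) → x' u ≤ x u) → P v x → P v x')
    (o : V → ℕ) (hok : ∀ v, o v ≤ k) (hfeas : ∀ v, P v o)
    (hopt : ∀ o' : V → ℕ, (∀ v, o' v ≤ k) → (∀ v, P v o') →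
      ∑ v, w v * o' v ≤ ∑ v, w v * o v)
    (U : Finset V) (g : V → ℕ) (hgk : ∀ v, g v ≤ k)
    (hgN2 : ∀ v ∈ n2F G U, g v = 0)
    (hgrim : ∀ v ∈ U \ innF G (innF G U), g v = 0)
    (hg : ∀ v ∈ innF G (U ∪ n2F G U), P v g) :
    ∑ v ∈ innF G (innF G U), w v * g v ≤ ∑ v ∈ U, w v * o v :=
  stmt4_general G w k P hanti o hok hfeas hopt U g hgk hg
end

section
/- Let V be a finite set partitioned into sets V₁,…,V_k with associated sets Sⱼ satisfying ⋃ⱼ rim(Vⱼ) ⊆ ⋃ⱼ Sⱼ, where rim(Vⱼ) = Vⱼ \ inner²(Vⱼ). Let Tⱼ = inner²(Vⱼ) ∪ Sⱼ and let w : V → ℝ≥0, o, o* : V → ℝ≥0, and values Wⱼ ≥ 0 with: (bound) ∑_{v∈Tⱼ} w(v)o*(v) ≤ Wⱼ for all j; (optimality) Wⱼ ≤ α·∑_{v∈Tⱼ} w(v)gⱼ(v) for some gⱼ; (growth) ∑_{v∈Tⱼ} w(v)gⱼ(v) ≤ (1+ε)·∑_{v∈Vⱼ} w(v)o(v) for all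 j. Then ∑_{v∈V} w(v)o*(v) ≤ α(1+ε)·∑_{v∈V} w(v)o(v). -/
/-! Every vertex of `Vc j` lies in `I j` or in the rim `Vc j \ I j`, which the `S j` cover; so the
sets `T j = I j ∪ S j` cover `V`, and by nonnegativity `f(o') ≤ ∑ⱼ ∑_{T j} w o'`. Bound, optimality
and growth bound each inner sum by `α(1+ε) ∑_{Vc j} w o`, and these add up to `α(1+ε) f(o)`
because the `Vc j` partition `V`. -/

open Finset

namespace Finset

theorem sum_biUnion_le_sum_sum {ι α M : Type*} [DecidableEq α] [AddCommMonoid M]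
    [PartialOrder M] [IsOrderedAddMonoid M] (s : Finset ι) (t : ι → Finset α) {f : α → M}
    (hf : ∀ a ∈ s.biUnion t, 0 ≤ f a) :
    ∑ a ∈ s.biUnion t, f a ≤ ∑ i ∈ s, ∑ a ∈ t i, f a := by
  have himage : (s.sigma t).image Sigma.snd = s.biUnion t := by
    ext a
    simp
  rw [← himage, sum_sigma' s t fun _ a => f a]
  exact sum_image_le_of_nonneg (himage ▸ hf)

theorem biUnion_subset_biUnion_union_of_sdiff_subset {ι α : Type*} [DecidableEq α]
    {s : Finset ι} {A I S : ι → Finset α}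
    (hrim : s.biUnion (fun j => A j \ I j) ⊆ s.biUnion S) :
    s.biUnion A ⊆ s.biUnion (fun j => I j ∪ S j) := by
  intro v hv
  obtain ⟨j, hj, hvA⟩ := mem_biUnion.mp hv
  by_cases hvI : v ∈ I j
  · exact mem_biUnion.mpr ⟨j, hj, mem_union_left _ hvI⟩
  · have hvrim : v ∈ s.biUnion (fun j => A j \ I j) :=
      mem_biUnion.mpr ⟨j, hj, mem_sdiff.mpr ⟨hvA, hvI⟩⟩
    obtain ⟨i, hi, hvS⟩ := mem_biUnion.mp (hrim hvrim)
    exact mem_biUnion.mpr ⟨i, hi, mem_union_right _ hvS⟩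

end Finset

theorem stmt7_general {V : Type*} [Fintype V] [DecidableEq V] {k : ℕ}
    (Vc I S : Fin k → Finset V)
    (hdisj : ∀ i j, i ≠ j → Disjoint (Vc i) (Vc j))
    (hcover : Finset.univ.biUnion Vc = Finset.univ)
    (hrim : Finset.univ.biUnion (fun j => Vc j \ I j) ⊆ Finset.univ.biUnion S)
    (w o o' : V → ℝ) (g : Fin k → V → ℝ) (W : Fin k → ℝ)
    (hw : ∀ v, 0 ≤ w v) (ho' : ∀ v, 0 ≤ o' v)
    (ε α : ℝ) (hα : 1 ≤ α)
    (hbound : ∀ j, ∑ v ∈ I j ∪ S j, w v * o' v ≤ W j)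
    (hopt : ∀ j, W j ≤ α * ∑ v ∈ I j ∪ S j, w v * g j v)
    (hgrow : ∀ j, ∑ v ∈ I j ∪ S j, w v * g j v ≤ (1 + ε) * ∑ v ∈ Vc j, w v * o v) :
    ∑ v, w v * o' v ≤ α * (1 + ε) * ∑ v, w v * o v := by
  have hwo' : ∀ v, 0 ≤ w v * o' v := fun v => mul_nonneg (hw v) (ho' v)
  have hT : univ ⊆ univ.biUnion (fun j => I j ∪ S j) :=
    hcover ▸ biUnion_subset_biUnion_union_of_sdiff_subset hrim
  have hpart (j) :
      ∑ v ∈ I j ∪ S j, w v * o' v ≤ α * (1 + ε) * ∑ v ∈ Vc j, w v * o v :=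
    calc ∑ v ∈ I j ∪ S j, w v * o' v ≤ α * ∑ v ∈ I j ∪ S j, w v * g j v :=
          (hbound j).trans (hopt j)
      _ ≤ α * ((1 + ε) * ∑ v ∈ Vc j, w v * o v) :=
          mul_le_mul_of_nonneg_left (hgrow j) (by linarith)
      _ = α * (1 + ε) * ∑ v ∈ Vc j, w v * o v := by ring
  calc ∑ v, w v * o' v ≤ ∑ v ∈ univ.biUnion (fun j => I j ∪ S j), w v * o' v :=
        sum_le_sum_of_subset_of_nonneg hT fun v _ _ => hwo' v
    _ ≤ ∑ j, ∑ v ∈ I j ∪ S j, w v * o' v := sum_biUnion_le_sum_sum _ _ fun v _ => hwo' v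
    _ ≤ ∑ j, α * (1 + ε) * ∑ v ∈ Vc j, w v * o v := sum_le_sum fun j _ => hpart j
    _ = α * (1 + ε) * ∑ v, w v * o v := by
      rw [← mul_sum, ← sum_biUnion fun i _ j _ hij => hdisj i j hij, hcover]

/-- Soundness of the compiler for canonical MaxDGPs (Section 4.5.2): with
`T j = I j ∪ S j` (inner² plus secondary sets), the bound, optimality, and growth
properties imply `f(o*) ≤ α(1+ε)·f(o)`. -/
theorem stmt7 {V : Type*} [Fintype V] [DecidableEq V] {k : ℕ}
    (Vc I S : Fin k → Finset V)
    (hI : ∀ j, I j ⊆ Vc j)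
    (hdisj : ∀ i j, i ≠ j → Disjoint (Vc i) (Vc j))
    (hcover : Finset.univ.biUnion Vc = Finset.univ)
    (hrim : Finset.univ.biUnion (fun j => Vc j \ I j) ⊆ Finset.univ.biUnion S)
    (w o o' : V → ℝ) (g : Fin k → V → ℝ) (W : Fin k → ℝ)
    (hw : ∀ v, 0 ≤ w v) (ho : ∀ v, 0 ≤ o v) (ho' : ∀ v, 0 ≤ o' v)
    (hgpos : ∀ j v, 0 ≤ g j v)
    (ε α : ℝ) (hε : 0 < ε) (hα : 1 ≤ α)
    (hbound : ∀ j, ∑ v ∈ I j ∪ S j, w v * o' v ≤ W j)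
    (hopt : ∀ j, W j ≤ α * ∑ v ∈ I j ∪ S j, w v * g j v)
    (hgrow : ∀ j, ∑ v ∈ I j ∪ S j, w v * g j v ≤ (1 + ε) * ∑ v ∈ Vc j, w v * o v) :
    ∑ v, w v * o' v ≤ α * (1 + ε) * ∑ v, w v * o v :=
  stmt7_general Vc I S hdisj hcover hrim w o o' g W hw ho' ε α hα hbound hopt hgrow
end

section
/- In any finite graph G with maximum degree Δ ≥ 1, for every maximal independent set M and every independent set I, |I| ≤ Δ·|M|. -/
/-- `s` is an independent set of `G`: pairwise non-adjacent vertices. -/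
def IsIndep {V : Type*} (G : SimpleGraph V) (s : Set V) : Prop :=
  s.Pairwise fun a b => ¬ G.Adj a b

/-!
A maximal independent set `M` is dominating, so the closed neighbourhoods of the vertices of `M`
cover `I`. Each closed neighbourhood `N[m]` meets the independent set `I` in at most
`max 1 (deg m) ≤ Δ` vertices: if `m ∈ I` then no neighbour of `m` lies in `I`, and otherwise
`N[m] ∩ I` lies inside the open neighbourhood of `m`.
-/

namespace IsIndep

variable {V : Type*} {G : SimpleGraph V}

theorem exists_adj_of_notMem {s : Set V} (hs : IsIndep G s)
    (hmax : ∀ v ∉ s, ¬ IsIndep G (insert v s)) {v : V} (hv : v ∉ s) :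
    ∃ m ∈ s, G.Adj v m := by
  by_contra! h
  exact hmax v hv <| Set.Pairwise.insert hs fun m hm _ => ⟨h m hm, fun hadj => h m hm hadj.symm⟩

theorem card_inter_closedNbhd_le [Fintype V] [DecidableEq V] [DecidableRel G.Adj]
    {I : Finset V} (hI : IsIndep G ↑I) (m : V) :
    (I ∩ insert m (G.neighborFinset m)).card ≤ max 1 (G.degree m) := by
  by_cases hm : m ∈ I
  · have hsingle : I ∩ insert m (G.neighborFinset m) = {m} := by
      refine Finset.eq_singleton_iff_unique_mem.mpr ⟨by simp [hm], fun v hv => ?_⟩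
      simp only [Finset.mem_inter, Finset.mem_insert, SimpleGraph.mem_neighborFinset] at hv
      obtain ⟨hvI, rfl | hadj⟩ := hv
      · rfl
      · exact absurd hadj (hI hm hvI hadj.ne)
    simp [hsingle]
  · have hsub : I ∩ insert m (G.neighborFinset m) ⊆ G.neighborFinset m := by
      rw [Finset.inter_insert_of_notMem hm]
      exact Finset.inter_subset_right
    calc (I ∩ insert m (G.neighborFinset m)).card ≤ G.degree m := Finset.card_le_card hsub
      _ ≤ max 1 (G.degree m) := le_max_right _ _

end IsIndep

theorem stmt12_general {V : Type*} [Fintype V] (G : SimpleGraph V)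
    [DecidableRel G.Adj] (hΔ : 1 ≤ G.maxDegree)
    (M : Finset V) (hM : IsIndep G ↑M)
    (hMmax : ∀ v ∉ M, ¬ IsIndep G (insert v ↑M : Set V))
    (I : Finset V) (hI : IsIndep G ↑I) :
    I.card ≤ G.maxDegree * M.card := by
  classical
  have hcover : I ⊆ M.biUnion fun m => I ∩ insert m (G.neighborFinset m) := by
    intro v hv
    by_cases hvM : v ∈ M
    · exact Finset.mem_biUnion.mpr ⟨v, hvM, by simp [hv]⟩
    · obtain ⟨m, hm, hadj⟩ := hM.exists_adj_of_notMem hMmax hvM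
      exact Finset.mem_biUnion.mpr ⟨m, hm, by simp [hv, hadj.symm]⟩
  have hfiber : ∀ m ∈ M, (I ∩ insert m (G.neighborFinset m)).card ≤ G.maxDegree :=
    fun m _ => (hI.card_inter_closedNbhd_le m).trans (max_le hΔ (G.degree_le_maxDegree m))
  calc I.card ≤ (M.biUnion fun m => I ∩ insert m (G.neighborFinset m)).card :=
        Finset.card_le_card hcover
    _ ≤ ∑ m ∈ M, (I ∩ insert m (G.neighborFinset m)).card := Finset.card_biUnion_le
    _ ≤ M.card * G.maxDegree := Finset.sum_le_card_nsmul M _ _ hfiber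
    _ = G.maxDegree * M.card := Nat.mul_comm _ _

/-- In a finite graph of maximum degree `Δ ≥ 1`, every independent set `I` satisfies
`|I| ≤ Δ·|M|` for every maximal independent set `M`. -/
theorem stmt12 {V : Type*} [Fintype V] [DecidableEq V] (G : SimpleGraph V)
    [DecidableRel G.Adj] (hΔ : 1 ≤ G.maxDegree)
    (M : Finset V) (hM : IsIndep G ↑M)
    (hMmax : ∀ v ∉ M, ¬ IsIndep G (insert v ↑M : Set V))
    (I : Finset V) (hI : IsIndep G ↑I) :
    I.card ≤ G.maxDegree * M.card :=
  stmt12_general G hΔ M hM hMmax I hI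
end
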